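/- arXiv:1304.0858 — 6 statements merged into one kernel-verified Lean document; each statement's English description precedes it below -/
import Mathlib

section
/- Any solution X of the discrete Riccati equation X(pt) = (1 - p a_2^{-1} t)/(X(t) + a_2 t) satisfies the symmetric q-P(A_4^{(1)}) equation (X(pt) X(t) - 1)(X(t) X(p^{-1}t) - 1) = t^2 (X(t) + a_1)(X(t) + a_1^{-1})/(X(t) + a_2 t) provided a_1 = p^{-1} a_2^2. -/
/-!
Writing the Riccati equation as `y (x + a t) = 1 - b t` with `y = X(pt)`, `x = X(t)`, the factor
`y x - 1` can be expressed through `x` alone, `-t (b x + a)/(x + a t)`, or through `y` alone,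
`-t (b + a y)`. Applying the first at `t` and the second at `p⁻¹ t` writes both factors of the
left-hand side as multiples of `t` linear in `X(t)`; the condition `a₁ = p⁻¹ a₂²` is what makes
their product factor as `t² (X(t) + a₁)(X(t) + a₁⁻¹)/(X(t) + a₂ t)`.
-/

section Riccati

variable {K : Type*} [Field K] {x y a b t : K}

theorem riccati_mul_sub_one_eq_of_eq_div (hD : x + a * t ≠ 0) (h : y = (1 - b * t) / (x + a * t)) :
    y * x - 1 = -t * (b * x + a) / (x + a * t) := by
  rw [h, div_mul_eq_mul_div, div_sub_one hD]
  ring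

theorem riccati_mul_sub_one_eq_of_eq_div' (hD : x + a * t ≠ 0) (h : y = (1 - b * t) / (x + a * t)) :
    y * x - 1 = -t * (b + a * y) := by
  rw [eq_div_iff hD] at h
  linear_combination h

end Riccati

theorem riccati_factors_mul_eq {K : Type*} [Field K] {p a : K} (hp : p ≠ 0) (ha : a ≠ 0) (x : K) :
    (p * a⁻¹ * x + a) * (a⁻¹ + a * p⁻¹ * x) = (x + p⁻¹ * a ^ 2) * (x + (p⁻¹ * a ^ 2)⁻¹) := by
  field_simp
  ring

/-- Any solution `X` of the discrete Riccati equation `X(pt) = (1 - p a₂⁻¹ t)/(X(t) + a₂ t)`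
satisfies the symmetric q-P(A₄⁽¹⁾) equation
`(X(pt)X(t) - 1)(X(t)X(p⁻¹t) - 1) = t² (X(t)+a₁)(X(t)+a₁⁻¹)/(X(t)+a₂ t)`
provided `a₁ = p⁻¹ a₂²`. -/
theorem symQPA4_of_riccati (p a1 a2 : ℂ) (hp : p ≠ 0) (ha2 : a2 ≠ 0) (X : ℂ → ℂ)
    (hden : ∀ t, X t + a2 * t ≠ 0)
    (hRic : ∀ t, X (p * t) = (1 - p * a2⁻¹ * t) / (X t + a2 * t))
    (ha1 : a1 = p⁻¹ * a2 ^ 2) :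
    ∀ t, (X (p * t) * X t - 1) * (X t * X (p⁻¹ * t) - 1)
      = t ^ 2 * (X t + a1) * (X t + a1⁻¹) / (X t + a2 * t) := by
  intro t
  have hForward := riccati_mul_sub_one_eq_of_eq_div (hden t) (hRic t)
  have hBackward : X t * X (p⁻¹ * t) - 1 = -t * (a2⁻¹ + a2 * p⁻¹ * X t) := by
    have h := hRic (p⁻¹ * t)
    rw [mul_inv_cancel_left₀ hp] at h
    rw [riccati_mul_sub_one_eq_of_eq_div' (hden _) h]
    field_simp
  rw [hForward, hBackward, ha1, mul_assoc (t ^ 2), ← riccati_factors_mul_eq hp ha2]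
  ring
end

section
/- Any solution W of the discrete Riccati equation W(pt) = p^{-ν₂/2}(W(t) + p^{(ν₂+1)/2} pt)/(W(t) + p^{ν₂/2}) satisfies the symmetric q-P(D_5^{(1)}) equation W(pt) W(p^{-1}t) = -(W(t) + p^{ν₁/2} pt)(W(t) - p^{-ν₁/2} pt)/((W(t) + p^{ν₂/2})(W(t) - p^{-ν₂/2})) when ν₁ = ν₂ + 1. -/
/-!
Writing `c = p^{ν₂/2}` and `σ = p^{1/2}`, the Riccati equation says that `W(pt)` is the image of
`W(t)` under a Möbius map whose determinant is `1`. Applying it at `p⁻¹t` and inverting the Möbius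
map expresses `W(p⁻¹t)` through `W(t)` as `(σt - cW(t)) / (W(t) - c⁻¹)`; multiplying by the forward
step, the factor `σt - cW(t) = -c (W(t) - p^{-ν₁/2} pt)` produces the right-hand side of q-P(D₅⁽¹⁾).
-/

lemma eq_div_of_eq_moebius {K : Type*} [Field K] {c s a w : K} (hc : c ≠ 0)
    (ha : a + c ≠ 0) (hw : w - c⁻¹ ≠ 0) (h : w = c⁻¹ * (a + c * s) / (a + c)) :
    a = (s - c * w) / (w - c⁻¹) := by
  rw [eq_div_iff hw, h]
  field_simp
  ring

theorem symQPD5_of_riccati_general (p sp pn1 pn2 : ℂ) (hp : p ≠ 0) (hsp : sp ^ 2 = p)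
    (h12 : pn1 = pn2 * sp) (W : ℂ → ℂ)
    (hden1 : ∀ t, W t + pn2 ≠ 0) (hden2 : ∀ t, W t - pn2⁻¹ ≠ 0)
    (hRic : ∀ t, W (p * t) = pn2⁻¹ * (W t + pn2 * sp * (p * t)) / (W t + pn2)) :
    ∀ t, W (p * t) * W (p⁻¹ * t)
      = -((W t + pn1 * (p * t)) * (W t - pn1⁻¹ * (p * t)))
          / ((W t + pn2) * (W t - pn2⁻¹)) := by
  -- with `pn2 = 0` the Riccati equation at `t = 0` would force `W 0 = 0`
  have hpn2 : pn2 ≠ 0 := fun h => hden1 0 (by simpa [h] using hRic 0)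
  intro t
  have hback : W (p⁻¹ * t) = (sp * t - pn2 * W t) / (W t - pn2⁻¹) := by
    refine eq_div_of_eq_moebius hpn2 (hden1 _) (hden2 t) ?_
    simpa only [mul_assoc, mul_inv_cancel_left₀ hp] using hRic (p⁻¹ * t)
  rw [hRic t, hback, h12, ← hsp]
  field_simp
  ring

/-- Any solution `W` of the discrete Riccati equation
`W(pt) = p^{-ν₂/2}(W(t) + p^{(ν₂+1)/2} pt)/(W(t) + p^{ν₂/2})` satisfies the symmetric
q-P(D₅⁽¹⁾) equation
`W(pt)W(p⁻¹t) = -(W(t) + p^{ν₁/2} pt)(W(t) - p^{-ν₁/2} pt)/((W(t) + p^{ν₂/2})(W(t) - p^{-ν₂/2}))`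
when `ν₁ = ν₂ + 1`. Here `sp` is a fixed branch of `p^{1/2}`, `pn1` of `p^{ν₁/2}` and
`pn2` of `p^{ν₂/2}`; the condition `ν₁ = ν₂ + 1` reads `pn1 = pn2 · sp`. -/
theorem symQPD5_of_riccati (p sp pn1 pn2 : ℂ) (hp : p ≠ 0) (hsp : sp ^ 2 = p)
    (hpn2 : pn2 ≠ 0) (h12 : pn1 = pn2 * sp) (W : ℂ → ℂ)
    (hden1 : ∀ t, W t + pn2 ≠ 0) (hden2 : ∀ t, W t - pn2⁻¹ ≠ 0)
    (hRic : ∀ t, W (p * t) = pn2⁻¹ * (W t + pn2 * sp * (p * t)) / (W t + pn2)) :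
    ∀ t, W (p * t) * W (p⁻¹ * t)
      = -((W t + pn1 * (p * t)) * (W t - pn1⁻¹ * (p * t)))
          / ((W t + pn2) * (W t - pn2⁻¹)) :=
  symQPD5_of_riccati_general p sp pn1 pn2 hp hsp h12 W hden1 hden2 hRic
end

section
/- Any solution X of the discrete Riccati equation X(pt) = (b_1·pt·X + b_1 b_5 - (p b_1^2 + b_5^2) t)/(b_1 b_5 (X - b_5 t)) satisfies the symmetric q-P(E_6^{(1)}) equation (X(pt) X(t) - 1)(X(t) X(p^{-1}t) - 1) = t^2 (X - b_1)(X - b_1^{-1})(X - b_3)(X - b_3^{-1})/((X - b_5 t)(X - b_5^{-1} t)) provided b_5^2 = p b_1 b_3. -/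
/-!
Cleared of denominators, the Riccati equation is a bilinear relation between consecutive values
of `X`. Multiplied by `x = X t`, it writes `X (p t) x - 1` and `x X (p⁻¹ t) - 1` as quadratics in
`x` over linear factors, and `b₅² = p b₁ b₃` is exactly what makes these quadratics split as
`p t (x - b₁)(x - b₃)` and `t (b₁ x - 1)(b₃ x - 1)`; their product is the q-P(E₆⁽¹⁾) equation.
-/

section RiccatiFactorization

variable {K : Type*} [Field K] {p b1 b3 b5 t x y : K}

theorem riccati_mul_sub_one_forward (hb1 : b1 ≠ 0) (hb5 : b5 ≠ 0) (hx : x - b5 * t ≠ 0)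
    (hy : y = (b1 * (p * t) * x + b1 * b5 - (p * b1 ^ 2 + b5 ^ 2) * t) / (b1 * b5 * (x - b5 * t)))
    (hcond : b5 ^ 2 = p * b1 * b3) :
    (y * x - 1) * (b5 * (x - b5 * t)) = p * t * (x - b1) * (x - b3) := by
  rw [eq_div_iff (by positivity)] at hy
  apply mul_left_cancel₀ hb1
  linear_combination x * hy - t * (x - b1) * hcond

theorem riccati_mul_sub_one_backward (hb1 : b1 ≠ 0) (hb5 : b5 ≠ 0) (hy : y - b5 * t ≠ 0)
    (hx : x = (b1 * (p * t) * y + b1 * b5 - (p * b1 ^ 2 + b5 ^ 2) * t) / (b1 * b5 * (y - b5 * t)))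
    (hcond : b5 ^ 2 = p * b1 * b3) :
    (x * y - 1) * (b5 * x - p * t) = p * t * (b1 * x - 1) * (b3 * x - 1) := by
  rw [eq_div_iff (by positivity)] at hx
  apply mul_left_cancel₀ hb1
  linear_combination x * hx + t * x * (b1 * x - 1) * hcond

end RiccatiFactorization

/-- Any solution `X` of the discrete Riccati equation
`X(pt) = (b₁·pt·X + b₁b₅ - (pb₁² + b₅²)t)/(b₁b₅(X - b₅t))` satisfies the symmetric
q-P(E₆⁽¹⁾) equation
`(X(pt)X(t)-1)(X(t)X(p⁻¹t)-1) = t²(X-b₁)(X-b₁⁻¹)(X-b₃)(X-b₃⁻¹)/((X-b₅t)(X-b₅⁻¹t))`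
provided `b₅² = p b₁ b₃`. -/
theorem symQPE6_of_riccati (p b1 b3 b5 : ℂ) (hp : p ≠ 0) (hb1 : b1 ≠ 0) (hb3 : b3 ≠ 0)
    (hb5 : b5 ≠ 0) (X : ℂ → ℂ)
    (hden1 : ∀ t, X t - b5 * t ≠ 0) (hden2 : ∀ t, X t - b5⁻¹ * t ≠ 0)
    (hRic : ∀ t, X (p * t)
      = (b1 * (p * t) * X t + b1 * b5 - (p * b1 ^ 2 + b5 ^ 2) * t) / (b1 * b5 * (X t - b5 * t)))
    (hcond : b5 ^ 2 = p * b1 * b3) :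
    ∀ t, (X (p * t) * X t - 1) * (X t * X (p⁻¹ * t) - 1)
      = t ^ 2 * (X t - b1) * (X t - b1⁻¹) * (X t - b3) * (X t - b3⁻¹)
          / ((X t - b5 * t) * (X t - b5⁻¹ * t)) := by
  intro t
  have hfwd := riccati_mul_sub_one_forward hb1 hb5 (hden1 t) (hRic t) hcond
  have hbwd := riccati_mul_sub_one_backward hb1 hb5 (hden1 (p⁻¹ * t)) (hRic (p⁻¹ * t)) hcond
  rw [mul_inv_cancel_left₀ hp] at hbwd
  rw [eq_div_iff (mul_ne_zero (hden1 t) (hden2 t))]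
  calc (X (p * t) * X t - 1) * (X t * X (p⁻¹ * t) - 1) * ((X t - b5 * t) * (X t - b5⁻¹ * t))
      = (X (p * t) * X t - 1) * (b5 * (X t - b5 * t))
          * ((X t * X (p⁻¹ * t) - 1) * (b5 * X t - t)) / b5 ^ 2 := by
        field_simp
    _ = p * t * (X t - b1) * (X t - b3) * (t * (b1 * X t - 1) * (b3 * X t - 1)) / b5 ^ 2 := by
        rw [hfwd, hbwd]
    _ = t ^ 2 * (X t - b1) * (X t - b1⁻¹) * (X t - b3) * (X t - b3⁻¹) := by
        rw [hcond]
        field_simp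
end

section
/- Heine's transformation: for |q| < 1, |z| < 1 and |bz| < 1, ₂φ₁(a, b; 0; q, z) = (bz;q)_∞ / (z;q)_∞ · ₁φ₁(b; bz; q, az). -/
open scoped BigOperators

/-- The finite q-Pochhammer symbol `(a;q)_n = ∏_{i=0}^{n-1}(1 - a q^i)`. -/
noncomputable def qPochN (a q : ℂ) (n : ℕ) : ℂ := ∏ i ∈ Finset.range n, (1 - a * q ^ i)

/-- The infinite q-Pochhammer symbol `(a;q)_∞ = ∏_{i=0}^∞ (1 - a q^i)`. -/
noncomputable def qPochInf (a q : ℂ) : ℂ := ∏' i : ℕ, (1 - a * q ^ i)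

/-- The basic hypergeometric series `₂φ₁(a,b;c;q,z)` (with `(0;q)_n = 1` when `c = 0`). -/
noncomputable def phi21 (a b c q z : ℂ) : ℂ :=
  ∑' n : ℕ, qPochN a q n * qPochN b q n / (qPochN c q n * qPochN q q n) * z ^ n

/-- The basic hypergeometric series `₁φ₁(a;c;q,x)`. -/
noncomputable def phi11 (a c q x : ℂ) : ℂ :=
  ∑' n : ℕ, qPochN a q n / (qPochN c q n * qPochN q q n) * (-1) ^ n * q ^ (n * (n - 1) / 2) * x ^ n


/-!
By Rothe's finite q-binomial formula,
`(a;q)_N / (q;q)_N = ∑_{n+m=N} q^{n(n-1)/2} (-a)^n / ((q;q)_n (q;q)_m)`,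
so `₂φ₁(a,b;0;q,z)` becomes a double series over `(n, m)`, absolutely convergent thanks to the
Gaussian factor `q^{n(n-1)/2}`. Summing over `m` first and using
`(b;q)_{n+m} = (b;q)_n (bq^n;q)_m`, the inner sum is the q-binomial series
`∑_m (bq^n;q)_m / (q;q)_m z^m = (bq^n z;q)_∞ / (z;q)_∞ = (bz;q)_∞ / ((bz;q)_n (z;q)_∞)`,
which turns the `n`-th term into that of `(bz;q)_∞ / (z;q)_∞ · ₁φ₁(b;bz;q,az)`.
The q-binomial theorem itself follows from `(1 - z) φ(z) = (1 - cz) φ(qz)`, iterated `k` times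
and letting `k → ∞`.
-/

open Finset Filter Topology

section QPochhammer

variable {x q : ℂ}

@[simp]
lemma qPochN_zero (x q : ℂ) : qPochN x q 0 = 1 := prod_range_zero _

lemma qPochN_succ (x q : ℂ) (n : ℕ) : qPochN x q (n + 1) = qPochN x q n * (1 - x * q ^ n) :=
  prod_range_succ _ n

@[simp]
lemma qPochN_zero_left (q : ℂ) (n : ℕ) : qPochN 0 q n = 1 := by simp [qPochN]

lemma qPochN_add (x q : ℂ) (n m : ℕ) :
    qPochN x q (n + m) = qPochN x q n * qPochN (x * q ^ n) q m := by
  simp only [qPochN, prod_range_add, pow_add, mul_assoc]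

lemma norm_mul_pow_lt_one (hx : ‖x‖ < 1) (hq : ‖q‖ ≤ 1) (n : ℕ) :
    ‖x * q ^ n‖ < 1 := by
  rw [norm_mul, norm_pow]
  exact mul_lt_one_of_nonneg_of_lt_one_left (norm_nonneg x) hx (pow_le_one₀ (norm_nonneg q) hq)

lemma one_sub_mul_pow_ne_zero (hx : ‖x‖ < 1) (hq : ‖q‖ ≤ 1) (n : ℕ) :
    1 - x * q ^ n ≠ 0 := by
  intro h
  simpa [← eq_of_sub_eq_zero h] using norm_mul_pow_lt_one hx hq n

lemma qPochN_ne_zero (hx : ‖x‖ < 1) (hq : ‖q‖ ≤ 1) (n : ℕ) : qPochN x q n ≠ 0 :=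
  prod_ne_zero_iff.2 fun i _ ↦ one_sub_mul_pow_ne_zero hx hq i

lemma summable_norm_mul_pow (x : ℂ) (hq : ‖q‖ < 1) :
    Summable fun n : ℕ ↦ ‖-(x * q ^ n)‖ := by
  simpa [norm_mul, norm_pow] using
    (summable_geometric_of_lt_one (norm_nonneg q) hq).mul_left ‖x‖

lemma multipliable_one_sub_mul_pow (x : ℂ) (hq : ‖q‖ < 1) :
    Multipliable fun n : ℕ ↦ 1 - x * q ^ n := by
  simpa [sub_eq_add_neg] using multipliable_one_add_of_summable (summable_norm_mul_pow x hq)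

lemma qPochInf_ne_zero (hx : ‖x‖ < 1) (hq : ‖q‖ < 1) : qPochInf x q ≠ 0 := by
  have h := tprod_one_add_ne_zero_of_summable
    (fun n ↦ by simpa only [← sub_eq_add_neg] using one_sub_mul_pow_ne_zero hx hq.le n)
    (summable_norm_mul_pow x hq)
  simpa only [qPochInf, ← sub_eq_add_neg] using h

lemma tendsto_qPochN (x : ℂ) (hq : ‖q‖ < 1) :
    Tendsto (qPochN x q) atTop (𝓝 (qPochInf x q)) :=
  (multipliable_one_sub_mul_pow x hq).tendsto_prod_tprod_nat

lemma qPochInf_eq_qPochN_mul (x : ℂ) (hq : ‖q‖ < 1) (n : ℕ) :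
    qPochInf x q = qPochN x q n * qPochInf (x * q ^ n) q := by
  have tail (i : ℕ) : 1 - x * q ^ n * q ^ i = 1 - x * q ^ (i + n) := by ring
  rw [qPochInf, qPochInf, qPochN, ← Multipliable.prod_mul_tprod_nat_mul'
    (by simpa only [tail] using multipliable_one_sub_mul_pow (x * q ^ n) hq)]
  simp only [tail]

lemma exists_norm_qPochN_le (x : ℂ) (hq : ‖q‖ < 1) :
    ∃ C, ∀ n, ‖qPochN x q n‖ ≤ C := by
  obtain ⟨C, hC⟩ := isBounded_iff_forall_norm_le.1
    (Metric.isBounded_range_of_tendsto _ (tendsto_qPochN x hq))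
  exact ⟨C, fun n ↦ hC _ (Set.mem_range_self n)⟩

lemma exists_norm_inv_qPochN_le (hx : ‖x‖ < 1) (hq : ‖q‖ < 1) :
    ∃ C, ∀ n, ‖(qPochN x q n)⁻¹‖ ≤ C := by
  obtain ⟨C, hC⟩ := isBounded_iff_forall_norm_le.1 (Metric.isBounded_range_of_tendsto _
    ((tendsto_qPochN x hq).inv₀ (qPochInf_ne_zero hx hq)))
  exact ⟨C, fun n ↦ hC _ (Set.mem_range_self n)⟩

end QPochhammer

section Rothe

variable {a q : ℂ}

noncomputable def rotheTerm (a q : ℂ) (p : ℕ × ℕ) : ℂ :=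
  q ^ (p.1 * (p.1 - 1) / 2) * (-a) ^ p.1 / (qPochN q q p.1 * qPochN q q p.2)

lemma one_sub_mul_pow_ne_zero_of_qPochN (hq : ∀ n, qPochN q q n ≠ 0) (n : ℕ) :
    1 - q * q ^ n ≠ 0 :=
  right_ne_zero_of_mul (qPochN_succ q q n ▸ hq (n + 1))

lemma rotheTerm_succ_snd (hq : ∀ n, qPochN q q n ≠ 0) (n m : ℕ) :
    (1 - q ^ (m + 1)) * rotheTerm a q (n, m + 1) = rotheTerm a q (n, m) := by
  simp only [rotheTerm, qPochN_succ, pow_succ']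
  field_simp [one_sub_mul_pow_ne_zero_of_qPochN hq m, hq n, hq m]

lemma rotheTerm_succ_fst (hq : ∀ n, qPochN q q n ≠ 0) (n m : ℕ) :
    q ^ m * (1 - q ^ (n + 1)) * rotheTerm a q (n + 1, m)
      = -a * q ^ (n + m) * rotheTerm a q (n, m) := by
  simp only [rotheTerm, Nat.triangle_succ, qPochN_succ, pow_add, pow_succ']
  field_simp [one_sub_mul_pow_ne_zero_of_qPochN hq n, hq n, hq m]

lemma sum_rotheTerm_antidiagonal_succ (hq : ∀ n, qPochN q q n ≠ 0) (N : ℕ) :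
    (1 - q ^ (N + 1)) * ∑ p ∈ antidiagonal (N + 1), rotheTerm a q p
      = (1 - a * q ^ N) * ∑ p ∈ antidiagonal N, rotheTerm a q p := by
  have split : ∀ p ∈ antidiagonal (N + 1), (1 - q ^ (N + 1)) * rotheTerm a q p
      = (1 - q ^ p.2) * rotheTerm a q p + q ^ p.2 * (1 - q ^ p.1) * rotheTerm a q p := by
    intro p hp
    rw [← mem_antidiagonal.1 hp]
    ring
  rw [mul_sum, sum_congr rfl split, sum_add_distrib, Nat.sum_antidiagonal_succ',
    Nat.sum_antidiagonal_succ]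
  simp only [rotheTerm_succ_snd hq, rotheTerm_succ_fst hq, Prod.mk.eta, pow_zero, sub_self,
    mul_zero, zero_mul, zero_add]
  rw [sub_mul, one_mul, sub_eq_add_neg, mul_sum, ← sum_neg_distrib]
  refine congrArg (_ + ·) (sum_congr rfl fun p hp ↦ ?_)
  rw [mem_antidiagonal.1 hp]
  ring

theorem qPochN_div_qPochN_eq_sum_rotheTerm (hq : ∀ n, qPochN q q n ≠ 0) (N : ℕ) :
    qPochN a q N / qPochN q q N = ∑ p ∈ antidiagonal N, rotheTerm a q p := by
  induction N with
  | zero => simp [rotheTerm]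
  | succ N ih =>
    have := one_sub_mul_pow_ne_zero_of_qPochN hq N
    rw [← mul_right_inj' (pow_succ' q N ▸ this), sum_rotheTerm_antidiagonal_succ hq, ← ih,
      qPochN_succ, qPochN_succ, pow_succ']
    field_simp [hq N]

end Rothe

section QBinomial

noncomputable def phi10 (c q z : ℂ) : ℂ := ∑' m : ℕ, qPochN c q m / qPochN q q m * z ^ m

variable {c q : ℂ}

lemma exists_norm_qPochN_div_le (c : ℂ) (hq : ‖q‖ < 1) :
    ∃ C, ∀ m, ‖qPochN c q m / qPochN q q m‖ ≤ C := by
  obtain ⟨A, hA⟩ := exists_norm_qPochN_le c hq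
  obtain ⟨B, hB⟩ := exists_norm_inv_qPochN_le hq hq
  refine ⟨A * B, fun m ↦ ?_⟩
  rw [div_eq_mul_inv, norm_mul]
  exact mul_le_mul (hA m) (hB m) (norm_nonneg _) ((norm_nonneg _).trans (hA m))

lemma summable_phi10 (c : ℂ) (hq : ‖q‖ < 1) {z : ℂ} (hz : ‖z‖ < 1) :
    Summable fun m : ℕ ↦ qPochN c q m / qPochN q q m * z ^ m := by
  obtain ⟨C, hC⟩ := exists_norm_qPochN_div_le c hq
  refine .of_norm_bounded ((summable_geometric_of_lt_one (norm_nonneg z) hz).mul_left C)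
    fun m ↦ ?_
  rw [norm_mul, norm_pow]
  exact mul_le_mul_of_nonneg_right (hC m) (by positivity)

lemma qPochN_div_qPochN_succ_mul (hq : ‖q‖ < 1) (m : ℕ) :
    qPochN c q (m + 1) / qPochN q q (m + 1) * (1 - q * q ^ m)
      = qPochN c q m / qPochN q q m * (1 - c * q ^ m) := by
  rw [qPochN_succ, qPochN_succ, div_mul_eq_mul_div,
    mul_div_mul_right _ _ (one_sub_mul_pow_ne_zero hq hq.le m)]
  ring

lemma one_sub_mul_phi10 (hq : ‖q‖ < 1) {z : ℂ} (hz : ‖z‖ < 1) :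
    (1 - z) * phi10 c q z = (1 - c * z) * phi10 c q (q * z) := by
  set t : ℕ → ℂ := fun m ↦ qPochN c q m / qPochN q q m
  have hqz : ‖q * z‖ < 1 := by simpa [mul_comm] using norm_mul_pow_lt_one hz hq.le 1
  have hs := summable_phi10 c hq hz
  have hs' := summable_phi10 c hq hqz
  have diff : phi10 c q z - phi10 c q (q * z) = ∑' m, t m * (1 - q ^ m) * z ^ m := by
    rw [phi10, phi10, ← hs.tsum_sub hs']
    exact tsum_congr fun m ↦ by ring
  have shift : ∑' m, t m * (1 - q ^ m) * z ^ m
      = z * (phi10 c q z - c * phi10 c q (q * z)) := by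
    have hsum : Summable fun m ↦ t m * (1 - q ^ m) * z ^ m :=
      (hs.sub hs').congr fun m ↦ by ring
    rw [hsum.tsum_eq_zero_add, phi10, phi10, ← tsum_mul_left, ← hs.tsum_sub (hs'.mul_left c),
      ← tsum_mul_left]
    simp only [pow_zero, sub_self, mul_zero, zero_mul, zero_add]
    refine tsum_congr fun m ↦ ?_
    rw [pow_succ', qPochN_div_qPochN_succ_mul hq]
    ring
  linear_combination diff + shift

lemma qPochN_mul_phi10 (hq : ‖q‖ < 1) {z : ℂ} (hz : ‖z‖ < 1) (k : ℕ) :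
    qPochN z q k * phi10 c q z = qPochN (c * z) q k * phi10 c q (q ^ k * z) := by
  induction k with
  | zero => simp
  | succ k ih =>
    have step := one_sub_mul_phi10 (c := c) (z := q ^ k * z) hq
      (by simpa [mul_comm] using norm_mul_pow_lt_one hz hq.le k)
    rw [qPochN_succ, qPochN_succ, mul_right_comm, ih, pow_succ', mul_assoc q]
    linear_combination qPochN (c * z) q k * step

lemma phi10_zero (c q : ℂ) : phi10 c q 0 = 1 := by
  rw [phi10, tsum_eq_single 0 fun m hm ↦ by simp [hm]]
  simp

lemma tendsto_phi10_nhds_zero (c : ℂ) (hq : ‖q‖ < 1) :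
    Tendsto (phi10 c q) (𝓝 0) (𝓝 1) := by
  obtain ⟨C, hC⟩ := exists_norm_qPochN_div_le c hq
  rw [← phi10_zero c q]
  refine tendsto_tsum_of_dominated_convergence (bound := fun m ↦ C * (1 / 2) ^ m)
    ((summable_geometric_two).mul_left C)
    (fun m ↦ (continuous_const.mul (continuous_pow m)).tendsto 0) ?_
  filter_upwards [Metric.closedBall_mem_nhds (0 : ℂ) one_half_pos] with w hw m
  rw [mem_closedBall_zero_iff] at hw
  rw [norm_mul, norm_pow]
  exact mul_le_mul (hC m) (pow_le_pow_left₀ (norm_nonneg w) hw m) (by positivity)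
    ((norm_nonneg _).trans (hC m))

theorem phi10_eq_qPochInf_div (c : ℂ) (hq : ‖q‖ < 1) {z : ℂ} (hz : ‖z‖ < 1) :
    phi10 c q z = qPochInf (c * z) q / qPochInf z q := by
  have lhs := (tendsto_qPochN z hq).mul_const (phi10 c q z)
  have rhs := (tendsto_qPochN (c * z) hq).mul ((tendsto_phi10_nhds_zero c hq).comp
    (by simpa using (tendsto_pow_atTop_nhds_zero_of_norm_lt_one hq).mul_const z))
  simp only [Function.comp_def, mul_one, ← qPochN_mul_phi10 hq hz] at rhs
  rw [eq_div_iff (qPochInf_ne_zero hz hq), mul_comm]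
  exact tendsto_nhds_unique lhs rhs

end QBinomial

lemma summable_pow_triangle_mul_pow {r : ℝ} (hr₀ : 0 ≤ r) (hr₁ : r < 1) (x : ℝ) :
    Summable fun n : ℕ ↦ r ^ (n * (n - 1) / 2) * x ^ n := by
  refine summable_of_ratio_norm_eventually_le one_half_lt_one ?_
  have small : ∀ᶠ n : ℕ in atTop, r ^ n * ‖x‖ ≤ 1 / 2 := by
    have := (tendsto_pow_atTop_nhds_zero_of_lt_one hr₀ hr₁).mul_const ‖x‖
    exact this.eventually_le_const (by norm_num)
  filter_upwards [small] with n hn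
  simp only [Nat.triangle_succ, pow_add, pow_succ, norm_mul, norm_pow, Real.norm_of_nonneg hr₀]
  calc r ^ (n * (n - 1) / 2) * r ^ n * (‖x‖ ^ n * ‖x‖)
      = r ^ n * ‖x‖ * (r ^ (n * (n - 1) / 2) * ‖x‖ ^ n) := by ring
    _ ≤ 1 / 2 * (r ^ (n * (n - 1) / 2) * ‖x‖ ^ n) := by gcongr

theorem tsum_sum_antidiagonal_eq_tsum {α A : Type*} [AddCommMonoid α] [TopologicalSpace α]
    [ContinuousAdd α] [T3Space α] [AddCommMonoid A] [HasAntidiagonal A] {f : A × A → α}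
    (hf : Summable f) : ∑' n, ∑ p ∈ antidiagonal n, f p = ∑' p, f p := by
  conv_lhs => congr; ext; rw [← sum_finset_coe, ← tsum_fintype (L := .unconditional _)]
  rw [← HasAntidiagonal.sigmaAntidiagonalEquivProd.tsum_eq f]
  exact (Summable.tsum_sigma' (fun n ↦ (hasSum_fintype _).summable)
    (HasAntidiagonal.sigmaAntidiagonalEquivProd.summable_iff.2 hf)).symm

section Heine

variable {a b q z : ℂ}

noncomputable def heineTerm (a b q z : ℂ) (p : ℕ × ℕ) : ℂ :=
  qPochN b q (p.1 + p.2) * z ^ (p.1 + p.2) * rotheTerm a q p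

lemma heineTerm_eq (a b q z : ℂ) (n m : ℕ) :
    heineTerm a b q z (n, m) = qPochN b q n * (qPochN q q n)⁻¹ * q ^ (n * (n - 1) / 2)
      * (-a * z) ^ n * (qPochN (b * q ^ n) q m / qPochN q q m * z ^ m) := by
  simp only [heineTerm, rotheTerm, qPochN_add, pow_add, mul_pow]
  ring

lemma sum_antidiagonal_heineTerm (hq : ∀ n, qPochN q q n ≠ 0) (N : ℕ) :
    ∑ p ∈ antidiagonal N, heineTerm a b q z p
      = qPochN a q N * qPochN b q N / qPochN q q N * z ^ N := by
  rw [mul_comm (qPochN a q N), mul_div_assoc, qPochN_div_qPochN_eq_sum_rotheTerm hq, mul_sum,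
    sum_mul]
  refine sum_congr rfl fun p hp ↦ ?_
  rw [heineTerm, mem_antidiagonal.1 hp]
  ring

lemma summable_heineTerm (a b : ℂ) (hq : ‖q‖ < 1) (hz : ‖z‖ < 1) :
    Summable (heineTerm a b q z) := by
  obtain ⟨A, hA⟩ := exists_norm_qPochN_le b hq
  obtain ⟨B, hB⟩ := exists_norm_inv_qPochN_le hq hq
  have hB₀ : 0 ≤ B := (norm_nonneg _).trans (hB 0)
  have hA₀ : 0 ≤ A := (norm_nonneg _).trans (hA 0)
  have bound : Summable fun p : ℕ × ℕ ↦
      A * B * B * (‖q‖ ^ (p.1 * (p.1 - 1) / 2) * ‖a * z‖ ^ p.1) * ‖z‖ ^ p.2 :=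
    ((summable_pow_triangle_mul_pow (norm_nonneg q) hq ‖a * z‖).mul_left _).mul_of_nonneg
      (summable_geometric_of_lt_one (norm_nonneg z) hz) (fun n ↦ by positivity)
      fun m ↦ by positivity
  refine .of_norm_bounded bound fun ⟨n, m⟩ ↦ ?_
  have factored : heineTerm a b q z (n, m)
      = qPochN b q (n + m) * (qPochN q q n)⁻¹ * (qPochN q q m)⁻¹
      * (q ^ (n * (n - 1) / 2) * (-a * z) ^ n) * z ^ m := by
    simp only [heineTerm, rotheTerm, pow_add, mul_pow]
    ring
  rw [factored]
  simp only [norm_mul, norm_pow, norm_neg]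
  gcongr
  exacts [hA _, hB _, hB _]

lemma tsum_heineTerm (a : ℂ) (hq : ‖q‖ < 1) (hz : ‖z‖ < 1) (hbz : ‖b * z‖ < 1)
    (n : ℕ) :
    ∑' m, heineTerm a b q z (n, m) = qPochInf (b * z) q / qPochInf z q
      * (qPochN b q n / (qPochN (b * z) q n * qPochN q q n) * (-1) ^ n * q ^ (n * (n - 1) / 2)
        * (a * z) ^ n) := by
  have tail : qPochInf (b * q ^ n * z) q = qPochInf (b * z) q / qPochN (b * z) q n := by
    rw [qPochInf_eq_qPochN_mul (b * z) hq n, mul_right_comm,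
      mul_div_cancel_left₀ _ (qPochN_ne_zero hbz hq.le n)]
  simp only [heineTerm_eq]
  rw [tsum_mul_left, ← phi10, phi10_eq_qPochInf_div _ hq hz, tail]
  rw [neg_mul, neg_pow, mul_pow]
  field_simp [qPochN_ne_zero hbz hq.le n, qPochN_ne_zero hq hq.le n, qPochInf_ne_zero hz hq]

end Heine

/-- Heine's transformation:
`₂φ₁(a,b;0;q,z) = (bz;q)_∞ / (z;q)_∞ · ₁φ₁(b;bz;q,az)` for `|q| < 1`, `|z| < 1`, `|bz| < 1`. -/
theorem heine_2phi1_c_zero_eq_1phi1 (a b q z : ℂ) (hq : ‖q‖ < 1) (hz : ‖z‖ < 1)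
    (hbz : ‖b * z‖ < 1) :
    phi21 a b 0 q z = qPochInf (b * z) q / qPochInf z q * phi11 b (b * z) q (a * z) := by
  have hF := summable_heineTerm a b hq hz
  calc phi21 a b 0 q z = ∑' N, ∑ p ∈ antidiagonal N, heineTerm a b q z p := by
        simp only [phi21, qPochN_zero_left, one_mul,
          sum_antidiagonal_heineTerm (qPochN_ne_zero hq hq.le)]
    _ = ∑' n, ∑' m, heineTerm a b q z (n, m) := by
        rw [tsum_sum_antidiagonal_eq_tsum hF, hF.tsum_prod' hF.prod_factor]
    _ = qPochInf (b * z) q / qPochInf z q * phi11 b (b * z) q (a * z) := by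
        rw [phi11, ← tsum_mul_left]
        exact tsum_congr (tsum_heineTerm a hq hz hbz)
end

section
/- As q → 1⁻, the q-Pochhammer symbol satisfies log(-q;q)_∞ = -π²/(12 log q) - (log 2)/2 + O(log q). -/
/-!
With `L = -log q`, the logarithm of the product is `∑_{n ≥ 1} f (n L)` for the convex, decreasing
function `f t = log (1 + e^{-t})`. The trapezoidal rule compares this sum with
`(1/L) ∫₀^∞ f - f 0 / 2`; since `f'` is monotone, the error on each cell `[kL, (k+1)L]` is
`O(L² (f'((k+1)L) - f'(kL)))`, and these telescope to `O(L²)`, which becomes `O(L)` after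
dividing by `L`. Finally `f 0 = log 2`, and expanding `f` in powers of `e^{-t}` gives
`∫₀^∞ f = ∑ (-1)ⁿ/(n+1)² = π²/12`.
-/

open scoped Real
open Asymptotics Filter Set MeasureTheory Topology

section TrapezoidRule

variable {f f' : ℝ → ℝ}

theorem image_sub_mem_Icc_of_monotoneOn_deriv {a b : ℝ} (hab : a ≤ b)
    (hf : ∀ x ∈ Icc a b, HasDerivAt f (f' x) x) (hf' : MonotoneOn f' (Icc a b)) :
    f b - f a ∈ Icc (f' a * (b - a)) (f' b * (b - a)) := by
  rcases hab.eq_or_lt with rfl | hlt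
  · simp
  obtain ⟨c, hc, hslope⟩ := exists_hasDerivAt_eq_slope f f' hlt
    (fun x hx => (hf x hx).continuousAt.continuousWithinAt)
    (fun x hx => hf x (Ioo_subset_Icc_self hx))
  rw [eq_div_iff (sub_pos.2 hlt).ne'] at hslope
  have hc' := Ioo_subset_Icc_self hc
  rw [← hslope]
  exact ⟨by gcongr; exact hf' (left_mem_Icc.2 hab) hc' hc'.1,
    by gcongr; exact hf' hc' (right_mem_Icc.2 hab) hc'.2⟩

theorem abs_trapezoid_sub_integral_le {a b : ℝ} (hab : a ≤ b)
    (hf : ∀ x ∈ Icc a b, HasDerivAt f (f' x) x) (hf' : MonotoneOn f' (Icc a b)) :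
    |(b - a) / 2 * (f a + f b) - ∫ x in a..b, f x| ≤ (b - a) ^ 2 / 2 * (f' b - f' a) := by
  -- The linear correction `f' a * (a + b - 2 x)` integrates to zero over `[a, b]`.
  have hpoint : ∀ x ∈ Icc a b,
      |f a + f b - 2 * f x - f' a * (a + b - 2 * x)| ≤ (f' b - f' a) * (b - a) := by
    intro x hx
    have hleft := image_sub_mem_Icc_of_monotoneOn_deriv hx.1
      (fun y hy => hf y ⟨hy.1, hy.2.trans hx.2⟩) (hf'.mono (Icc_subset_Icc le_rfl hx.2))
    have hright := image_sub_mem_Icc_of_monotoneOn_deriv hx.2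
      (fun y hy => hf y ⟨hx.1.trans hy.1, hy.2⟩) (hf'.mono (Icc_subset_Icc hx.1 le_rfl))
    have hxa : f' x * (x - a) ≤ f' b * (x - a) :=
      mul_le_mul_of_nonneg_right (hf' hx (right_mem_Icc.2 hab) hx.2) (sub_nonneg.2 hx.1)
    have hbx : f' a * (b - x) ≤ f' x * (b - x) :=
      mul_le_mul_of_nonneg_right (hf' (left_mem_Icc.2 hab) hx hx.1) (sub_nonneg.2 hx.2)
    have hmono : 0 ≤ f' b - f' a :=
      sub_nonneg.2 (hf' (left_mem_Icc.2 hab) (right_mem_Icc.2 hab) hab)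
    rw [abs_le]
    constructor <;> nlinarith [hleft.1, hleft.2, hright.1, hright.2, hx.1, hx.2]
  have hcont : ContinuousOn f (uIcc a b) := by
    rw [uIcc_of_le hab]
    exact fun x hx => (hf x hx).continuousAt.continuousWithinAt
  have hintegral : ∫ x in a..b, (f a + f b - 2 * f x - f' a * (a + b - 2 * x))
      = (b - a) * (f a + f b) - 2 * ∫ x in a..b, f x := by
    rw [intervalIntegral.integral_sub, intervalIntegral.integral_sub,
      intervalIntegral.integral_const_mul, intervalIntegral.integral_const_mul,
      intervalIntegral.integral_sub, intervalIntegral.integral_const_mul, integral_id]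
    · simp only [intervalIntegral.integral_const, smul_eq_mul]
      ring
    all_goals first
      | exact (continuousOn_const.mul hcont).intervalIntegrable
      | exact (continuousOn_const.sub (continuousOn_const.mul hcont)).intervalIntegrable
      | exact Continuous.intervalIntegrable (by fun_prop) _ _
  have hbound := intervalIntegral.norm_integral_le_of_norm_le_const
    (f := fun x => f a + f b - 2 * f x - f' a * (a + b - 2 * x))
    (fun x hx => hpoint x (Ioc_subset_Icc_self ((uIoc_of_le hab) ▸ hx)))
  rw [hintegral, Real.norm_eq_abs, abs_of_nonneg (sub_nonneg.2 hab)] at hbound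
  rw [abs_le] at hbound ⊢
  constructor <;> nlinarith [hbound.1, hbound.2]

theorem abs_sum_trapezoid_sub_integral_le {h : ℝ} (hh : 0 ≤ h)
    (hf : ∀ x ∈ Ici 0, HasDerivAt f (f' x) x) (hf' : MonotoneOn f' (Ici 0)) (N : ℕ) :
    |h * ∑ k ∈ Finset.range N, f ((k + 1) * h) + h / 2 * (f 0 - f (N * h))
        - ∫ x in 0..N * h, f x| ≤ h ^ 2 / 2 * (f' (N * h) - f' 0) := by
  induction N with
  | zero => simp
  | succ N ih =>
    have hN : 0 ≤ (N : ℝ) * h := by positivity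
    have hstep : (N : ℝ) * h ≤ (N + 1) * h := by nlinarith
    have hcont : ContinuousOn f (Ici 0) :=
      fun x hx => (hf x hx).continuousAt.continuousWithinAt
    have hint₁ : IntervalIntegrable f volume 0 (N * h) :=
      (hcont.mono fun x hx => (le_min le_rfl hN).trans hx.1).intervalIntegrable
    have hint₂ : IntervalIntegrable f volume (N * h) ((N + 1) * h) :=
      (hcont.mono fun x hx => (le_min hN (hN.trans hstep)).trans hx.1).intervalIntegrable
    have htrap := abs_trapezoid_sub_integral_le hstep
      (fun x hx => hf x (hN.trans hx.1)) (hf'.mono fun x hx => hN.trans hx.1)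
    rw [show ((N : ℝ) + 1) * h - N * h = h by ring] at htrap
    push_cast
    rw [← intervalIntegral.integral_add_adjacent_intervals hint₁ hint₂, Finset.sum_range_succ]
    calc _ = |(h * ∑ k ∈ Finset.range N, f ((k + 1) * h) + h / 2 * (f 0 - f (N * h))
            - ∫ x in 0..N * h, f x) + (h / 2 * (f (N * h) + f ((N + 1) * h))
            - ∫ x in N * h..(N + 1) * h, f x)| := by ring_nf
      _ ≤ _ := abs_add_le _ _
      _ ≤ h ^ 2 / 2 * (f' (N * h) - f' 0) + h ^ 2 / 2 * (f' ((N + 1) * h) - f' (N * h)) :=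
        add_le_add ih htrap
      _ = _ := by ring

theorem abs_tsum_sub_integral_div_le {h : ℝ} (hh : 0 < h)
    (hf : ∀ x ∈ Ici 0, HasDerivAt f (f' x) x) (hf' : MonotoneOn f' (Ici 0))
    (hf'_nonpos : ∀ x ∈ Ici 0, f' x ≤ 0) (hsum : Summable fun n : ℕ => f ((n + 1) * h))
    (hint : IntegrableOn f (Ioi 0)) (hlim : Tendsto f atTop (𝓝 0)) :
    |∑' n : ℕ, f ((n + 1) * h) - (∫ x in Ioi 0, f x) / h + f 0 / 2| ≤ -f' 0 * h / 2 := by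
  have hNh : Tendsto (fun N : ℕ => (N : ℝ) * h) atTop atTop :=
    tendsto_natCast_atTop_atTop.atTop_mul_const hh
  have hconv : Tendsto (fun N : ℕ => h * ∑ k ∈ Finset.range N, f ((k + 1) * h)
      + h / 2 * (f 0 - f (N * h)) - ∫ x in 0..N * h, f x) atTop
      (𝓝 (h * ∑' n : ℕ, f ((n + 1) * h) + h / 2 * (f 0 - 0) - ∫ x in Ioi 0, f x)) :=
    ((hsum.hasSum.tendsto_sum_nat.const_mul h).add
      ((tendsto_const_nhds.sub (hlim.comp hNh)).const_mul (h / 2))).sub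
      (intervalIntegral_tendsto_integral_Ioi 0 hint hNh)
  have hbound (N : ℕ) : |h * ∑ k ∈ Finset.range N, f ((k + 1) * h)
      + h / 2 * (f 0 - f (N * h)) - ∫ x in 0..N * h, f x| ≤ -f' 0 * h ^ 2 / 2 := by
    have htrap := abs_sum_trapezoid_sub_integral_le hh.le hf hf' N
    have hend := hf'_nonpos (N * h) (by simp only [mem_Ici]; positivity)
    nlinarith
  have hlimit := le_of_tendsto hconv.abs (Eventually.of_forall hbound)
  rw [show h * ∑' n : ℕ, f ((n + 1) * h) + h / 2 * (f 0 - 0) - ∫ x in Ioi 0, f x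
      = h * (∑' n : ℕ, f ((n + 1) * h) - (∫ x in Ioi 0, f x) / h + f 0 / 2) by
    field_simp; ring, abs_mul, abs_of_pos hh] at hlimit
  rw [← mul_le_mul_iff_right₀ hh]
  linarith

end TrapezoidRule

noncomputable def logOneAddExpNeg (t : ℝ) : ℝ := Real.log (1 + Real.exp (-t))

theorem logOneAddExpNeg_zero : logOneAddExpNeg 0 = Real.log 2 := by
  norm_num [logOneAddExpNeg, one_add_one_eq_two]

theorem hasDerivAt_logOneAddExpNeg (t : ℝ) :
    HasDerivAt logOneAddExpNeg (-(1 + Real.exp t)⁻¹) t := by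
  refine ((((hasDerivAt_neg t).exp).const_add 1).log (by positivity)).congr_deriv ?_
  rw [Real.exp_neg]
  field_simp
  ring

theorem monotone_neg_inv_one_add_exp : Monotone fun t : ℝ => -(1 + Real.exp t)⁻¹ :=
  fun s t hst => by dsimp only; gcongr

theorem continuous_logOneAddExpNeg : Continuous logOneAddExpNeg :=
  continuous_iff_continuousAt.2 fun t => (hasDerivAt_logOneAddExpNeg t).continuousAt

theorem logOneAddExpNeg_nonneg (t : ℝ) : 0 ≤ logOneAddExpNeg t :=
  Real.log_nonneg (by linarith [Real.exp_pos (-t)])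

theorem logOneAddExpNeg_le_exp_neg (t : ℝ) : logOneAddExpNeg t ≤ Real.exp (-t) := by
  linarith [Real.log_le_sub_one_of_pos (show 0 < 1 + Real.exp (-t) by positivity),
    show logOneAddExpNeg t = Real.log (1 + Real.exp (-t)) from rfl]

theorem integrableOn_logOneAddExpNeg : IntegrableOn logOneAddExpNeg (Ioi 0) :=
  (exp_neg_integrableOn_Ioi 0 one_pos).mono' continuous_logOneAddExpNeg.aestronglyMeasurable
    (Eventually.of_forall fun t => by
      simpa [Real.norm_of_nonneg (logOneAddExpNeg_nonneg t)] using logOneAddExpNeg_le_exp_neg t)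

theorem tendsto_logOneAddExpNeg_atTop : Tendsto logOneAddExpNeg atTop (𝓝 0) :=
  squeeze_zero logOneAddExpNeg_nonneg logOneAddExpNeg_le_exp_neg
    Real.tendsto_exp_neg_atTop_nhds_zero

theorem summable_logOneAddExpNeg_mul {h : ℝ} (hh : 0 < h) :
    Summable fun n : ℕ => logOneAddExpNeg ((n + 1) * h) := by
  refine .of_nonneg_of_le (fun n => logOneAddExpNeg_nonneg _)
    (fun n => logOneAddExpNeg_le_exp_neg _) ?_
  refine ((summable_nat_add_iff 1).2 (Real.summable_exp_nat_mul_iff.2 (neg_neg_of_pos hh))).congr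
    fun n => ?_
  push_cast
  ring_nf

theorem hasSum_logOneAddExpNeg {t : ℝ} (ht : 0 < t) :
    HasSum (fun n : ℕ => (-1) ^ n / ((n : ℝ) + 1) * Real.exp (-((n : ℝ) + 1) * t))
      (logOneAddExpNeg t) := by
  have hlt : |-Real.exp (-t)| < 1 := by
    rw [abs_neg, abs_of_pos (Real.exp_pos _)]
    exact Real.exp_lt_one_iff.2 (neg_neg_of_pos ht)
  have h := (Real.hasSum_pow_div_log_of_abs_lt_one hlt).neg
  rw [neg_neg, sub_neg_eq_add] at h
  refine h.congr_fun fun n => ?_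
  rw [neg_pow (Real.exp (-t)), ← Real.exp_nat_mul, pow_succ]
  push_cast
  ring_nf

theorem hasSum_neg_one_pow_div_succ_sq :
    HasSum (fun n : ℕ => (-1 : ℝ) ^ n / ((n : ℝ) + 1) ^ 2) (π ^ 2 / 12) := by
  -- The Fourier series of the Bernoulli polynomial `B₂`, evaluated at `x = 1/2`.
  have h := (hasSum_nat_add_iff' 1).2 <|
    hasSum_one_div_nat_pow_mul_cos one_ne_zero (x := 1 / 2) ⟨by norm_num, by norm_num⟩
  have hB : (Polynomial.map (algebraMap ℚ ℝ) (Polynomial.bernoulli 2)).eval (1 / 2 : ℝ)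
      = -12⁻¹ := by
    rw [← bernoulliFun, bernoulliFun_two]; norm_num
  have hcos (n : ℕ) : Real.cos (2 * π * ((n + 1 : ℕ) : ℝ) * (1 / 2)) = -(-1) ^ n := by
    rw [show 2 * π * ((n + 1 : ℕ) : ℝ) * (1 / 2) = (n + 1 : ℕ) * π by ring, Real.cos_nat_mul_pi,
      pow_succ]
    ring
  simp only [Nat.mul_one, Nat.reduceAdd, hB, hcos] at h
  have h' := h.neg
  norm_num [Nat.factorial] at h'
  rw [show (2 * π) ^ 2 / 2 / 2 * (1 / 12) = π ^ 2 / 12 by ring] at h'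
  exact h'.congr_fun fun n => div_eq_inv_mul _ _

theorem integral_exp_neg_mul_Ioi_zero {b : ℝ} (hb : 0 < b) :
    ∫ t in Ioi 0, Real.exp (-b * t) = 1 / b := by
  rw [integral_exp_mul_Ioi (neg_neg_of_pos hb), mul_zero, Real.exp_zero]
  field_simp

theorem integral_logOneAddExpNeg : ∫ t in Ioi 0, logOneAddExpNeg t = π ^ 2 / 12 := by
  set F : ℕ → ℝ → ℝ := fun n t => (-1) ^ n / ((n : ℝ) + 1) * Real.exp (-((n : ℝ) + 1) * t)
  have hpos (n : ℕ) : (0 : ℝ) < n + 1 := by positivity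
  have hF_int (n : ℕ) : IntegrableOn (F n) (Ioi 0) :=
    (exp_neg_integrableOn_Ioi 0 (hpos n)).const_mul _
  have hF_integral (n : ℕ) : ∫ t in Ioi 0, F n t = (-1) ^ n / ((n : ℝ) + 1) ^ 2 := by
    rw [integral_const_mul, integral_exp_neg_mul_Ioi_zero (hpos n)]
    field_simp
  have hF_norm (n : ℕ) : ∫ t in Ioi 0, ‖F n t‖ = 1 / ((n : ℝ) + 1) ^ 2 := by
    simp_rw [F, norm_mul, norm_div, norm_pow, norm_neg, norm_one, one_pow,
      Real.norm_of_nonneg (hpos n).le, Real.norm_of_nonneg (Real.exp_pos _).le]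
    rw [integral_const_mul, integral_exp_neg_mul_Ioi_zero (hpos n)]
    field_simp
  have hswap := hasSum_integral_of_summable_integral_norm hF_int <| by
    simp only [hF_norm]
    exact_mod_cast (summable_nat_add_iff 1).2 (Real.summable_one_div_nat_pow.2 one_lt_two)
  rw [setIntegral_congr_fun measurableSet_Ioi fun t ht => (hasSum_logOneAddExpNeg ht).tsum_eq.symm]
  simp only [hF_integral] at hswap
  exact hswap.unique hasSum_neg_one_pow_div_succ_sq

theorem hasProd_one_add_pow {q : ℝ} (hq0 : 0 < q) (hq1 : q < 1) :
    HasProd (fun n : ℕ => 1 + q ^ (n + 1))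
      (Real.exp (∑' n : ℕ, logOneAddExpNeg ((n + 1) * -Real.log q))) := by
  refine (summable_logOneAddExpNeg_mul (neg_pos.2 (Real.log_neg hq0 hq1))).hasSum.rexp.congr_fun
    fun n => ?_
  rw [Function.comp_apply, logOneAddExpNeg, Real.exp_log (by positivity), mul_neg, neg_neg,
    ← Nat.cast_add_one, Real.exp_nat_mul, Real.exp_log hq0]

theorem abs_log_tprod_one_add_pow_sub_le {q : ℝ} (hq0 : 0 < q) (hq1 : q < 1) :
    |Real.log (∏' n : ℕ, (1 + q ^ (n + 1))) - (-(π ^ 2) / (12 * Real.log q) - Real.log 2 / 2)|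
      ≤ -Real.log q / 4 := by
  have hL : 0 < -Real.log q := neg_pos.2 (Real.log_neg hq0 hq1)
  have h := abs_tsum_sub_integral_div_le hL (fun x _ => hasDerivAt_logOneAddExpNeg x)
    (monotone_neg_inv_one_add_exp.monotoneOn _) (fun x _ => neg_nonpos.2 (by positivity))
    (summable_logOneAddExpNeg_mul hL) integrableOn_logOneAddExpNeg tendsto_logOneAddExpNeg_atTop
  rw [integral_logOneAddExpNeg, logOneAddExpNeg_zero] at h
  rw [(hasProd_one_add_pow hq0 hq1).tprod_eq, Real.log_exp]
  generalize ∑' n : ℕ, logOneAddExpNeg ((n + 1) * -Real.log q) = S at h ⊢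
  calc _ = |S - π ^ 2 / 12 / -Real.log q + Real.log 2 / 2| := by
        congr 1
        field_simp
        ring
    _ ≤ _ := h
    _ = -Real.log q / 4 := by norm_num; ring

/-- As `q → 1⁻`, `log(-q;q)_∞ = -π²/(12 log q) - (log 2)/2 + O(log q)`. -/
theorem qPochhammer_asymptotic_neg_q :
    (fun q : ℝ => Real.log (∏' n : ℕ, (1 + q ^ (n + 1)))
        - (-(π ^ 2) / (12 * Real.log q) - Real.log 2 / 2))
      =O[nhdsWithin 1 (Set.Ioo (0:ℝ) 1)] (fun q : ℝ => Real.log q) := by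
  refine IsBigO.of_bound (1 / 4) ?_
  filter_upwards [self_mem_nhdsWithin] with q ⟨hq0, hq1⟩
  rw [Real.norm_eq_abs, Real.norm_eq_abs, abs_of_neg (Real.log_neg hq0 hq1)]
  linarith [abs_log_tprod_one_add_pow_sub_le hq0 hq1]
end

section
/- Let g₁'(z) = (1/z) log(1 + z²/(z-2)) + 4isε/(z² - 4) with s ∈ ℂ fixed, s ≠ 0. For all sufficiently small real ε ≠ 0, g₁' has exactly one zero in the disk |z| ≤ 1/2, and this zero z₁ satisfies z₁ = -2isε + 2s²ε² + O(ε³). -/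
/-- The function `g₁'(z) = (1/z) log(1 + z²/(z-2)) + 4isε/(z²-4)`, extended holomorphically
to `z = 0` (where the first term vanishes, by `log(1 + z²/(z-2)) = -z²/2 + O(z³)`). -/
noncomputable def gOneDeriv (s ε z : ℂ) : ℂ :=
  (if z = 0 then 0 else Complex.log (1 + z ^ 2 / (z - 2)) / z)
    + 4 * Complex.I * s * ε / (z ^ 2 - 4)

/-!
Multiplying by `z² - 4`, which does not vanish on the disk, the zeros of `g₁'` there are the
solutions of `F z = y`, where `y = -4isε` and `F = logPart`, `F z = (z² - 4) log(1 + w) / z`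
with `w = z²/(z-2)`. Since `log(1 + w) = w + O(w²)`, `F z = 2z + z² + O(z³)` on the disk, so `F`
is holomorphic near `0` with `F'(0) = 2`, and the inverse function theorem gives a unique
solution near `0` for small `y`. The estimate `‖z‖ ≤ ‖F z‖` on the disk confines every solution
to that neighbourhood. Inverting the expansion, `z = y/2 - y²/8 + O(y³)`.
-/

open Complex Filter Topology

noncomputable def logPart (z : ℂ) : ℂ := (z ^ 2 - 4) * log (1 + z ^ 2 / (z - 2)) / z

@[simp]
lemma logPart_zero : logPart 0 = 0 := by
  simp [logPart]

lemma gOneDeriv_eq_div {s ε z : ℂ} (hz : z ^ 2 ≠ 4) :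
    gOneDeriv s ε z = (logPart z + 4 * I * s * ε) / (z ^ 2 - 4) := by
  have hz4 : z ^ 2 - 4 ≠ 0 := sub_ne_zero.mpr hz
  rw [gOneDeriv, logPart]
  split_ifs with hz0
  · simp [hz0]
  · field_simp

lemma gOneDeriv_eq_zero_iff {s ε z : ℂ} (hz : z ^ 2 ≠ 4) :
    gOneDeriv s ε z = 0 ↔ logPart z = -(4 * I * s * ε) := by
  rw [gOneDeriv_eq_div hz, div_eq_zero_iff, or_iff_left (sub_ne_zero.mpr hz),
    add_eq_zero_iff_eq_neg]

lemma sq_ne_four_of_norm_le {z : ℂ} (hz : ‖z‖ ≤ 1 / 2) : z ^ 2 ≠ 4 := by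
  intro h
  have := congrArg norm h
  rw [norm_pow, Complex.norm_ofNat] at this
  nlinarith [norm_nonneg z]

lemma three_halves_le_norm_sub_two {z : ℂ} (hz : ‖z‖ ≤ 1 / 2) : 3 / 2 ≤ ‖z - 2‖ := by
  have := norm_sub_norm_le (2 : ℂ) z
  rw [norm_sub_rev, Complex.norm_ofNat] at this
  linarith

lemma norm_sq_div_sub_two_le {z : ℂ} (hz : ‖z‖ ≤ 1 / 2) :
    ‖z ^ 2 / (z - 2)‖ ≤ 2 / 3 * ‖z‖ ^ 2 := by
  have h2 := three_halves_le_norm_sub_two hz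
  rw [norm_div, norm_pow, div_le_iff₀ (by linarith)]
  nlinarith [norm_nonneg z]

lemma norm_log_one_add_sub_self_le_sq {w : ℂ} (hw : ‖w‖ ≤ 1 / 2) :
    ‖log (1 + w) - w‖ ≤ ‖w‖ ^ 2 := by
  have hinv : (1 - ‖w‖)⁻¹ ≤ 2 := by
    rw [inv_le_comm₀ (by linarith) two_pos]
    linarith
  calc ‖log (1 + w) - w‖ ≤ ‖w‖ ^ 2 * (1 - ‖w‖)⁻¹ / 2 :=
        norm_log_one_add_sub_self_le (by linarith)
    _ ≤ ‖w‖ ^ 2 * 2 / 2 := by gcongr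
    _ = ‖w‖ ^ 2 := by ring

lemma norm_logPart_sub_le {z : ℂ} (hz : ‖z‖ ≤ 1 / 2) :
    ‖logPart z - (2 * z + z ^ 2)‖ ≤ 2 * ‖z‖ ^ 3 := by
  rcases eq_or_ne z 0 with rfl | hz0
  · simp
  set w := z ^ 2 / (z - 2) with hw
  have hz2 : z - 2 ≠ 0 := norm_pos_iff.mp (by linarith [three_halves_le_norm_sub_two hz])
  have hwz := norm_sq_div_sub_two_le hz
  -- `(z² - 4) w / z = z (z + 2) = 2z + z²`
  have hid : logPart z - (2 * z + z ^ 2) = (z ^ 2 - 4) * (log (1 + w) - w) / z := by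
    rw [logPart, hw]
    field_simp
    ring
  have hlog : ‖log (1 + w) - w‖ ≤ 4 / 9 * ‖z‖ ^ 4 :=
    (norm_log_one_add_sub_self_le_sq (by nlinarith [norm_nonneg z])).trans
      (by nlinarith [norm_nonneg w, norm_nonneg z])
  have hz4 : ‖z ^ 2 - 4‖ ≤ 17 / 4 := by
    refine (norm_sub_le _ _).trans ?_
    rw [norm_pow, Complex.norm_ofNat]
    nlinarith [norm_nonneg z]
  rw [hid, norm_div, norm_mul, div_le_iff₀ (norm_pos_iff.mpr hz0)]
  calc ‖z ^ 2 - 4‖ * ‖log (1 + w) - w‖ ≤ 17 / 4 * (4 / 9 * ‖z‖ ^ 4) := by gcongr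
    _ ≤ 2 * ‖z‖ ^ 3 * ‖z‖ := by nlinarith [pow_nonneg (norm_nonneg z) 4]

lemma norm_le_norm_logPart {z : ℂ} (hz : ‖z‖ ≤ 1 / 2) : ‖z‖ ≤ ‖logPart z‖ := by
  have herr := norm_logPart_sub_le hz
  have hlin : 2 * ‖z‖ - ‖z‖ ^ 2 ≤ ‖2 * z + z ^ 2‖ := by
    have := norm_sub_norm_le (2 * z) (-(z ^ 2))
    rwa [sub_neg_eq_add, norm_neg, norm_mul, norm_pow, Complex.norm_ofNat] at this
  have hsub := norm_sub_norm_le (2 * z + z ^ 2) (2 * z + z ^ 2 - logPart z)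
  rw [sub_sub_cancel, norm_sub_rev] at hsub
  nlinarith [norm_nonneg z]

lemma norm_sub_le_of_logPart_eq {z y : ℂ} (hz : ‖z‖ ≤ 1 / 2) (h : logPart z = y) :
    ‖z - (y / 2 - y ^ 2 / 8)‖ ≤ 2 * ‖y‖ ^ 3 := by
  set g := logPart z - (2 * z + z ^ 2) with hg
  have hgz : ‖g‖ ≤ 2 * ‖z‖ ^ 3 := norm_logPart_sub_le hz
  have hzy : ‖z‖ ≤ ‖y‖ := h ▸ norm_le_norm_logPart hz
  have hfirst : z - y / 2 = -(z ^ 2 + g) / 2 := by rw [hg, ← h]; ring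
  have hfirst_le : ‖z - y / 2‖ ≤ ‖y‖ ^ 2 := by
    rw [hfirst, norm_div, norm_neg, Complex.norm_ofNat]
    calc ‖z ^ 2 + g‖ / 2 ≤ (‖z‖ ^ 2 + 2 * ‖z‖ ^ 3) / 2 := by
          gcongr; exact (norm_add_le _ _).trans (by rw [norm_pow]; linarith)
      _ ≤ ‖z‖ ^ 2 := by nlinarith [norm_nonneg z]
      _ ≤ ‖y‖ ^ 2 := by gcongr
  have hsum_le : ‖z + y / 2‖ ≤ 3 / 2 * ‖y‖ := by
    refine (norm_add_le _ _).trans ?_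
    rw [norm_div, Complex.norm_ofNat]
    linarith
  have hsecond : z - (y / 2 - y ^ 2 / 8) = -((z - y / 2) * (z + y / 2)) / 2 - g / 2 := by
    linear_combination hfirst
  rw [hsecond]
  refine (norm_sub_le _ _).trans ?_
  rw [norm_div, norm_div, norm_neg, norm_mul, Complex.norm_ofNat]
  have hg_le : ‖g‖ ≤ 2 * ‖y‖ ^ 3 := hgz.trans (by gcongr)
  calc ‖z - y / 2‖ * ‖z + y / 2‖ / 2 + ‖g‖ / 2 ≤ ‖y‖ ^ 2 * (3 / 2 * ‖y‖) / 2 + 2 * ‖y‖ ^ 3 / 2 := by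
        gcongr
    _ ≤ 2 * ‖y‖ ^ 3 := by nlinarith [pow_nonneg (norm_nonneg y) 3]

lemma hasDerivAt_logPart : HasDerivAt logPart 2 0 := by
  rw [hasDerivAt_iff_isLittleO]
  simp only [sub_zero]
  refine Asymptotics.IsBigO.trans_isLittleO ?_ (Asymptotics.isLittleO_pow_id one_lt_two)
  refine Asymptotics.IsBigO.of_bound 2 ?_
  filter_upwards [Metric.closedBall_mem_nhds (0 : ℂ) one_half_pos] with z hz
  rw [mem_closedBall_zero_iff] at hz
  have herr := norm_logPart_sub_le hz
  have hsplit : logPart z - logPart 0 - z • (2 : ℂ) = (logPart z - (2 * z + z ^ 2)) + z ^ 2 := by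
    rw [logPart_zero, smul_eq_mul]
    ring
  rw [hsplit, norm_pow]
  refine (norm_add_le _ _).trans ?_
  rw [norm_pow]
  nlinarith [norm_nonneg z]

lemma differentiableOn_logPart : DifferentiableOn ℂ logPart (Metric.ball 0 (1 / 2)) := by
  intro z hz
  rw [mem_ball_zero_iff] at hz
  rcases eq_or_ne z 0 with rfl | hz0
  · exact hasDerivAt_logPart.differentiableAt.differentiableWithinAt
  have hz2 : z - 2 ≠ 0 := norm_pos_iff.mp (by linarith [three_halves_le_norm_sub_two hz.le])
  have hslit : 1 + z ^ 2 / (z - 2) ∈ slitPlane := mem_slitPlane_of_norm_lt_one <|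
    (norm_sq_div_sub_two_le hz.le).trans_lt (by nlinarith [norm_nonneg z])
  have hw : DifferentiableAt ℂ (fun z : ℂ => 1 + z ^ 2 / (z - 2)) z := by
    fun_prop (disch := exact hz2)
  exact ((((differentiableAt_pow 2).sub_const 4).mul (hw.clog hslit)).div
    differentiableAt_id hz0).differentiableWithinAt

lemma hasStrictDerivAt_logPart : HasStrictDerivAt logPart 2 0 :=
  ((differentiableOn_logPart.contDiffOn (n := 1) Metric.isOpen_ball).contDiffAt
    (Metric.ball_mem_nhds 0 one_half_pos)).hasStrictDerivAt' hasDerivAt_logPart one_ne_zero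

lemma eventually_existsUnique_logPart_eq :
    ∀ᶠ y in 𝓝 0, ∃! z : ℂ, ‖z‖ ≤ 1 / 2 ∧ logPart z = y := by
  have H := hasStrictDerivAt_logPart
  obtain ⟨r, hr, hleft⟩ := Metric.eventually_nhds_iff.mp (H.eventually_left_inverse two_ne_zero)
  have hsmall : Metric.ball (0 : ℂ) (min r (1 / 2)) ∈ 𝓝 0 :=
    Metric.ball_mem_nhds 0 (lt_min hr one_half_pos)
  have hright := H.eventually_right_inverse two_ne_zero
  have htend := (H.hasStrictFDerivAt_equiv two_ne_zero).localInverse_tendsto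
  rw [logPart_zero] at hright htend
  filter_upwards [hright, htend hsmall, hsmall] with y hy hy_inv hy_small
  simp only [Set.mem_preimage, mem_ball_zero_iff, lt_min_iff] at hy_inv hy_small
  refine ⟨_, ⟨hy_inv.2.le, hy⟩, fun z ⟨hz, hzy⟩ => ?_⟩
  -- every solution in the disk satisfies `‖z‖ ≤ ‖y‖ < r`, where `logPart` has a left inverse
  subst hzy
  exact (hleft ((mem_ball_zero_iff.mpr ((norm_le_norm_logPart hz).trans_lt hy_small.1)))).symm

theorem gOneDeriv_unique_zero_general (s : ℂ) :
    ∃ ε₀ > 0, ∃ C > 0, ∀ ε : ℝ, ε ≠ 0 → |ε| < ε₀ →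
      (∃! z : ℂ, ‖z‖ ≤ 1 / 2 ∧ gOneDeriv s (ε : ℂ) z = 0) ∧
      ∀ z : ℂ, ‖z‖ ≤ 1 / 2 → gOneDeriv s (ε : ℂ) z = 0 →
        ‖z - (-2 * Complex.I * s * (ε : ℂ) + 2 * s ^ 2 * (ε : ℂ) ^ 2)‖ ≤ C * |ε| ^ 3 := by
  have hzero_iff {ε : ℝ} {z : ℂ} (hz : ‖z‖ ≤ 1 / 2) :=
    gOneDeriv_eq_zero_iff (s := s) (ε := ε) (sq_ne_four_of_norm_le hz)
  have hy : Tendsto (fun ε : ℝ => -(4 * I * s * ε)) (𝓝 0) (𝓝 0) := by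
    simpa using (by fun_prop : Continuous fun ε : ℝ => -(4 * I * s * ε)).tendsto 0
  obtain ⟨ε₀, hε₀, hunique⟩ :=
    Metric.eventually_nhds_iff.mp (hy.eventually eventually_existsUnique_logPart_eq)
  refine ⟨ε₀, hε₀, 128 * ‖s‖ ^ 3 + 1, by positivity, fun ε _ hε => ⟨?_, fun z hz hzero => ?_⟩⟩
  · refine (existsUnique_congr fun z => and_congr_right fun hz => hzero_iff hz).mpr ?_
    exact hunique (by rwa [Real.dist_eq, sub_zero])
  · have hasymp := norm_sub_le_of_logPart_eq hz ((hzero_iff hz).mp hzero)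
    have hexpand : -(4 * I * s * ε) / 2 - (-(4 * I * s * ε)) ^ 2 / 8 =
        -2 * I * s * ε + 2 * s ^ 2 * ε ^ 2 := by
      linear_combination (-2 * s ^ 2 * (ε : ℂ) ^ 2) * I_sq
    rw [hexpand, norm_neg, norm_mul, norm_mul, norm_mul, norm_I, Complex.norm_ofNat,
      norm_real, Real.norm_eq_abs] at hasymp
    refine hasymp.trans ?_
    nlinarith [pow_nonneg (abs_nonneg ε) 3, pow_nonneg (norm_nonneg s) 3]

/-- For `s ≠ 0` and all sufficiently small real `ε ≠ 0`, `g₁'` has exactly one zero in the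
disk `|z| ≤ 1/2`, and this zero satisfies `z₁ = -2isε + 2s²ε² + O(ε³)`. -/
theorem gOneDeriv_unique_zero (s : ℂ) (hs : s ≠ 0) :
    ∃ ε₀ > 0, ∃ C > 0, ∀ ε : ℝ, ε ≠ 0 → |ε| < ε₀ →
      (∃! z : ℂ, ‖z‖ ≤ 1 / 2 ∧ gOneDeriv s (ε : ℂ) z = 0) ∧
      ∀ z : ℂ, ‖z‖ ≤ 1 / 2 → gOneDeriv s (ε : ℂ) z = 0 →
        ‖z - (-2 * Complex.I * s * (ε : ℂ) + 2 * s ^ 2 * (ε : ℂ) ^ 2)‖ ≤ C * |ε| ^ 3 :=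
  gOneDeriv_unique_zero_general s
end
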